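/- In the ultrametric space (WM(A), d), the relation u ∼_n v iff u and v cannot be separated by any Ext-algebra of size at most n is an equivalence relation of finite index, each class being an open ball of radius 2^{-n}; consequently WM(A) is totally bounded and its completion is compact. -/

import Mathlib

/-! A morphism from `WM(A)` into an `Ext`-algebra is determined by its values on internal letters
and on the operations `ext_{a,b}` of call/return pairs, and a target with at most `n` elements is
isomorphic to a monoid structure on some `Fin m` with `m ≤ n`. So the values of a word under all
morphisms into algebras of size at most `n` are recorded in an element of a finite type that
determines its `∼ₙ`-class, and `∼ₙ` has finite index. The classes are balls because
`d(u, v) < 2⁻ⁿ` says exactly that no algebra of size at most `n` separates `u` and `v`. Finite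
index at every scale gives total boundedness, hence a compact completion. -/

inductive VPKind : Type
  | call | ret | intern
deriving DecidableEq

class VPAlphabet (A : Type) where
  kind : A → VPKind

variable {A : Type} [VPAlphabet A]

inductive WellMatched : List A → Prop
  | nil : WellMatched []
  | intern (c : A) (hc : VPAlphabet.kind c = VPKind.intern) : WellMatched [c]
  | ext (a b : A) (w : List A) (ha : VPAlphabet.kind a = VPKind.call)
      (hb : VPAlphabet.kind b = VPKind.ret) (hw : WellMatched w) :
      WellMatched (a :: w ++ [b])
  | append (u v : List A) (hu : WellMatched u) (hv : WellMatched v) : WellMatched (u ++ v)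

theorem wm_insert {u v x : List A} (h : WellMatched (u ++ v)) (hx : WellMatched x) :
    WellMatched (u ++ x ++ v) := by
  suffices H : ∀ w, WellMatched w → ∀ u' v' : List A, w = u' ++ v' →
      WellMatched (u' ++ x ++ v') from H _ h u v rfl
  intro w hw
  induction hw with
  | nil =>
    intro u' v' huv
    obtain ⟨rfl, rfl⟩ := List.append_eq_nil_iff.mp huv.symm
    simpa using hx
  | intern c hc =>
    intro u' v' huv
    rcases u' with _ | ⟨a, u''⟩
    · simp only [List.nil_append] at huv
      subst huv
      simpa using WellMatched.append x [c] hx (WellMatched.intern c hc)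
    · have h1 : c = a := by injection huv
      have h2 : ([] : List A) = u'' ++ v' := by injection huv
      obtain ⟨rfl, rfl⟩ := List.append_eq_nil_iff.mp h2.symm
      subst h1
      simpa using WellMatched.append [c] x (WellMatched.intern c hc) hx
  | ext a b w' ha hb hw' ih =>
    intro u' v' huv
    rcases u' with _ | ⟨a'', u''⟩
    · simp only [List.nil_append] at huv
      subst huv
      simpa using WellMatched.append x _ hx (WellMatched.ext a b w' ha hb hw')
    · have h1 : a = a'' := by injection huv
      have huv2 : w' ++ [b] = u'' ++ v' := by injection huv
      subst h1
      rcases List.eq_nil_or_concat v' with rfl | ⟨v'', b'', rfl⟩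
      · have h3 : u'' = w' ++ [b] := by simpa using huv2.symm
        subst h3
        simpa using WellMatched.append _ x (WellMatched.ext a b w' ha hb hw') hx
      · have h4 : w' = u'' ++ v'' ∧ [b] = [b''] :=
          List.append_inj' (by simpa [List.append_assoc] using huv2) rfl
        obtain ⟨rfl, hb'⟩ := h4
        have hbb : b = b'' := by injection hb'
        subst hbb
        have := WellMatched.ext a b _ ha hb (ih u'' v'' rfl)
        simpa [List.append_assoc] using this
  | append w₁ w₂ h₁ h₂ ih₁ ih₂ =>
    intro u' v' huv
    rcases List.append_eq_append_iff.mp huv with ⟨a', rfl, rfl⟩ | ⟨c', rfl, rfl⟩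
    · have := WellMatched.append _ _ h₁ (ih₂ a' v' rfl)
      simpa [List.append_assoc] using this
    · have := WellMatched.append _ _ (ih₁ u' c' rfl) h₂
      simpa [List.append_assoc] using this

def WM (A : Type) [VPAlphabet A] : Type := {w : List A // WellMatched w}

instance : Monoid (WM A) where
  one := ⟨[], WellMatched.nil⟩
  mul u v := ⟨u.1 ++ v.1, WellMatched.append _ _ u.2 v.2⟩
  mul_assoc a b c := Subtype.ext (List.append_assoc _ _ _)
  one_mul a := Subtype.ext (List.nil_append _)
  mul_one a := Subtype.ext (List.append_nil _)

@[simp] theorem WM.mul_val (x y : WM A) : (x * y).1 = x.1 ++ y.1 := rfl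
@[simp] theorem WM.one_val : (1 : WM A).1 = [] := rfl

instance : Nonempty (WM A) := ⟨1⟩

def extWord (u v : List A) (h : WellMatched (u ++ v)) (x : WM A) : WM A :=
  ⟨u ++ x.1 ++ v, wm_insert h x.2⟩

@[simp] theorem extWord_val (u v : List A) (h : WellMatched (u ++ v)) (x : WM A) :
    (extWord u v h x).1 = u ++ x.1 ++ v := rfl

structure ExtAlgebra (R : Type*) [Monoid R] where
  O : Submonoid (Function.End R)
  mulLeft_mem : ∀ r : R, (fun x => r * x) ∈ O
  mulRight_mem : ∀ r : R, (fun x => x * r) ∈ O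

structure ExtAlgHom {R S : Type*} [Monoid R] [Monoid S]
    (ER : ExtAlgebra R) (ES : ExtAlgebra S) where
  toMonoidHom : R →* S
  opMap : ER.O →* ES.O
  compat : ∀ (e : ER.O) (r : R),
    (opMap e : Function.End S) (toMonoidHom r) = toMonoidHom ((e : Function.End R) r)

/-- A morphism of `Ext`-algebras from the free `Ext`-algebra of well-matched words
into an `Ext`-algebra `R`, given by its monoid part and by the images of the
operations `ext_{u,v}`. -/
structure ExtHomWM (A : Type) [VPAlphabet A] {R : Type*} [Monoid R] (ER : ExtAlgebra R) where
  toMonoidHom : WM A →* R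
  op : ∀ u v : List A, WellMatched (u ++ v) → ER.O
  op_one : op [] [] WellMatched.nil = 1
  op_comp : ∀ u v (h : WellMatched (u ++ v)) u' v' (h' : WellMatched (u' ++ v'))
      (h'' : WellMatched ((u ++ u') ++ (v' ++ v))),
      op (u ++ u') (v' ++ v) h'' = op u v h * op u' v' h'
  op_spec : ∀ u v (h : WellMatched (u ++ v)) (x : WM A),
      (op u v h : Function.End R) (toMonoidHom x) = toMonoidHom (extWord u v h x)

/-- `R` recognises `L` via the morphism `φ` when `L` is the preimage of its image. -/
def Recognises {R : Type*} [Monoid R] {ER : ExtAlgebra R}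
    (φ : ExtHomWM A ER) (L : Set (WM A)) : Prop :=
  L = φ.toMonoidHom ⁻¹' (φ.toMonoidHom '' L)

/-- The free `Ext`-algebra structure on the monoid of well-matched words. -/
def freeExt (A : Type) [VPAlphabet A] : ExtAlgebra (WM A) where
  O :=
    { carrier := {e | ∃ u v, ∃ h : WellMatched (u ++ v), ∀ x : WM A, e x = extWord u v h x}
      one_mem' := ⟨[], [], WellMatched.nil, fun x => Subtype.ext (by show x.1 = [] ++ x.1 ++ []; simp)⟩
      mul_mem' := by
        rintro e f ⟨u, v, h, he⟩ ⟨u', v', h', hf⟩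
        have h'' : WellMatched ((u ++ u') ++ (v' ++ v)) := by
          simpa [List.append_assoc] using wm_insert h h'
        exact ⟨u ++ u', v' ++ v, h'', fun x => by
          rw [show (e * f) x = e (f x) from rfl, hf, he]
          exact Subtype.ext (by simp [List.append_assoc])⟩ }
  mulLeft_mem r := ⟨r.1, [], by simpa using r.2, fun x => Subtype.ext (by simp)⟩
  mulRight_mem r := ⟨[], r.1, by simpa using r.2, fun x => Subtype.ext (by simp)⟩

/-- A sub-`Ext`-algebra of an `Ext`-algebra. -/
structure SubExt {S : Type*} [Monoid S] (ES : ExtAlgebra S) where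
  carrier : Submonoid S
  ops : Submonoid (Function.End S)
  ops_le : ops ≤ ES.O
  maps_to : ∀ e ∈ ops, ∀ x ∈ carrier, e x ∈ carrier
  mulLeft_mem : ∀ r ∈ carrier, (fun x => r * x) ∈ ops
  mulRight_mem : ∀ r ∈ carrier, (fun x => x * r) ∈ ops

/-- The `Ext`-algebra structure induced on a sub-`Ext`-algebra. -/
def SubExt.toExtAlgebra {S : Type*} [Monoid S] {ES : ExtAlgebra S} (T : SubExt ES) :
    ExtAlgebra T.carrier where
  O :=
    { carrier := {e : Function.End T.carrier | ∃ f ∈ T.ops, ∀ x : T.carrier, (e x : S) = f x}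
      one_mem' := ⟨1, T.ops.one_mem, fun _ => rfl⟩
      mul_mem' := by
        rintro e e' ⟨f, hf, he⟩ ⟨f', hf', he'⟩
        exact ⟨f * f', mul_mem hf hf', fun x => by
          rw [show (e * e') x = e (e' x) from rfl, show (f * f') (x : S) = f (f' x) from rfl,
            ← he', he]⟩ }
  mulLeft_mem r := ⟨fun x => (r : S) * x, T.mulLeft_mem r r.2, fun _ => rfl⟩
  mulRight_mem r := ⟨fun x => x * (r : S), T.mulRight_mem r r.2, fun _ => rfl⟩

/-- `ER` is a quotient of `ES` if there is a surjective morphism of `Ext`-algebras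
from `ES` onto `ER`. -/
def IsQuotientOf {R S : Type*} [Monoid R] [Monoid S]
    (ER : ExtAlgebra R) (ES : ExtAlgebra S) : Prop :=
  ∃ h : ExtAlgHom ES ER, Function.Surjective h.toMonoidHom ∧ Function.Surjective h.opMap

/-- Bundled finite `Ext`-algebras. -/
structure BExt : Type 1 where
  carrier : Type
  [mon : Monoid carrier]
  [fin : Finite carrier]
  ext : ExtAlgebra carrier

attribute [instance] BExt.mon BExt.fin

section ListTake

variable {B : Type*}

theorem take_take_append (N k : ℕ) (hk : k ≤ N) (x v : List B) :
    ((x.take N) ++ v).take k = (x ++ v).take k := by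
  rw [List.take_append, List.take_append, List.take_take,
    List.length_take]
  rw [min_eq_left hk]
  congr 2
  omega

theorem take_mid (N : ℕ) (u s v : List B) :
    (u ++ s.take N ++ v).take N = (u ++ s ++ v).take N := by
  conv_lhs => rw [List.append_assoc, List.take_append]
  conv_rhs => rw [List.append_assoc, List.take_append]
  congr 1
  exact take_take_append N _ (Nat.sub_le _ _) s v

theorem take_append_right (N : ℕ) (u s : List B) :
    (u ++ s.take N).take N = (u ++ s).take N := by
  have := take_mid N u s ([] : List B)
  simpa using this

end ListTake

/-- The monoid of words of length at most `N`, with truncated concatenation. -/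
def TruncM (B : Type) (N : ℕ) : Type := {l : List B // l.length ≤ N}

instance {B : Type} {N : ℕ} : Monoid (TruncM B N) where
  one := ⟨[], by simp⟩
  mul u v := ⟨(u.1 ++ v.1).take N, by rw [List.length_take]; exact min_le_left _ _⟩
  mul_assoc a b c := Subtype.ext (by
    show ((a.1 ++ b.1).take N ++ c.1).take N = (a.1 ++ (b.1 ++ c.1).take N).take N
    rw [take_take_append N N le_rfl, take_append_right, List.append_assoc])
  one_mul a := Subtype.ext (by
    show (([] : List B) ++ a.1).take N = a.1
    rw [List.nil_append]
    exact List.take_of_length_le a.2)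
  mul_one a := Subtype.ext (by
    show (a.1 ++ ([] : List B)).take N = a.1
    rw [List.append_nil]
    exact List.take_of_length_le a.2)

@[simp] theorem TruncM.one_val {B : Type} {N : ℕ} : (1 : TruncM B N).1 = [] := rfl
@[simp] theorem TruncM.mul_val {B : Type} {N : ℕ} (u v : TruncM B N) :
    (u * v).1 = (u.1 ++ v.1).take N := rfl

instance {B : Type} [Finite B] {N : ℕ} : Finite (TruncM B N) := by
  haveI : Finite (Option B) := Finite.of_equiv (B ⊕ (PUnit : Type)) (Equiv.optionEquivSumPUnit B).symm
  refine Finite.of_injective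
    (fun l : TruncM B N => fun i : Fin (N + 1) => l.1[(i : ℕ)]?) ?_
  intro a b hab
  apply Subtype.ext
  apply List.ext_getElem?
  intro i
  by_cases hi : i < N + 1
  · exact congrFun hab ⟨i, hi⟩
  · have ha := a.2
    have hb := b.2
    rw [List.getElem?_eq_none (by omega), List.getElem?_eq_none (by omega)]

/-- Truncation is a monoid morphism on well-matched words. -/
def truncMonoidHom (A : Type) [VPAlphabet A] (N : ℕ) : WM A →* TruncM A N where
  toFun w := ⟨w.1.take N, by rw [List.length_take]; exact min_le_left _ _⟩
  map_one' := Subtype.ext (by simp)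
  map_mul' u v := Subtype.ext (by
    show (u.1 ++ v.1).take N = (u.1.take N ++ v.1.take N).take N
    rw [take_take_append N N le_rfl, take_append_right])

/-- The truncation monoid as an `Ext`-algebra with all functions as operations. -/
def truncExt (A : Type) [VPAlphabet A] (N : ℕ) : ExtAlgebra (TruncM A N) where
  O := ⊤
  mulLeft_mem _ := trivial
  mulRight_mem _ := trivial

def truncOp {A : Type} [VPAlphabet A] {N : ℕ} (u v : List A) : Function.End (TruncM A N) :=
  fun m => ⟨(u ++ m.1 ++ v).take N, by rw [List.length_take]; exact min_le_left _ _⟩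

/-- The truncation morphism of `Ext`-algebras. -/
def truncExtHom (A : Type) [VPAlphabet A] (N : ℕ) : ExtHomWM A (truncExt A N) where
  toMonoidHom := truncMonoidHom A N
  op u v _ := ⟨truncOp u v, trivial⟩
  op_one := by
    apply Subtype.ext
    funext m
    apply Subtype.ext
    show (([] : List A) ++ m.1 ++ []).take N = m.1
    simpa using List.take_of_length_le m.2
  op_comp u v h u' v' h' h'' := by
    apply Subtype.ext
    funext m
    apply Subtype.ext
    show ((u ++ u') ++ m.1 ++ (v' ++ v)).take N = (u ++ ((u' ++ m.1 ++ v').take N) ++ v).take N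
    rw [take_mid]
    simp [List.append_assoc]
  op_spec u v h x := by
    apply Subtype.ext
    show (u ++ (x.1.take N) ++ v).take N = (u ++ x.1 ++ v).take N
    exact take_mid N u x.1 v

/-- `x` and `y` can be separated by a finite `Ext`-algebra of cardinality at most `n`. -/
def SepBound (n : ℕ) (x y : WM A) : Prop :=
  ∃ (R : BExt) (φ : ExtHomWM A R.ext),
    Nat.card R.carrier ≤ n ∧ φ.toMonoidHom x ≠ φ.toMonoidHom y

/-- The minimal cardinality of a finite `Ext`-algebra separating `x` and `y`. -/
noncomputable def sepDeg (x y : WM A) : ℕ := sInf {n | SepBound n x y}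

/-- The profinite (ultra)metric on well-matched words. -/
noncomputable def pdist (x y : WM A) : ℝ :=
  open scoped Classical in if x = y then 0 else (2 : ℝ)⁻¹ ^ sepDeg x y

theorem pdist_nonneg (x y : WM A) : 0 ≤ pdist x y := by
  unfold pdist
  split
  · exact le_rfl
  · positivity

theorem sepBound_comm {n : ℕ} {x y : WM A} : SepBound n x y ↔ SepBound n y x := by
  constructor <;> rintro ⟨R, φ, h1, h2⟩ <;> exact ⟨R, φ, h1, h2.symm⟩

theorem pdist_comm (x y : WM A) : pdist x y = pdist y x := by
  have h1 : sepDeg x y = sepDeg y x := by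
    unfold sepDeg
    congr 1
    ext n
    exact sepBound_comm
  rcases eq_or_ne x y with rfl | h
  · rfl
  · unfold pdist
    rw [if_neg h, if_neg (Ne.symm h), h1]

theorem exists_sepBound [Finite A] {x y : WM A} (hxy : x ≠ y) : ∃ n, SepBound n x y := by
  classical
  set N := max x.1.length y.1.length with hN
  refine ⟨Nat.card (TruncM A N),
    { carrier := TruncM A N, ext := truncExt A N }, truncExtHom A N, le_rfl, ?_⟩
  intro hcontra
  have hv : x.1.take N = y.1.take N := congrArg Subtype.val hcontra
  rw [List.take_of_length_le (le_max_left _ _ : x.1.length ≤ N),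
    List.take_of_length_le (le_max_right _ _ : y.1.length ≤ N)] at hv
  exact hxy (Subtype.ext hv)

theorem pdist_ultra [Finite A] (x y z : WM A) :
    pdist x z ≤ max (pdist x y) (pdist y z) := by
  rcases eq_or_ne x z with rfl | hxz
  · calc pdist x x = 0 := by simp [pdist]
      _ ≤ _ := le_max_of_le_left (pdist_nonneg _ _)
  rcases eq_or_ne x y with rfl | hxy
  · exact le_max_of_le_right le_rfl
  rcases eq_or_ne y z with rfl | hyz
  · exact le_max_of_le_left le_rfl
  have hSne : {n | SepBound n x z}.Nonempty := exists_sepBound hxz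
  obtain ⟨R, φ, hcard, hne⟩ := Nat.sInf_mem hSne
  by_cases hxy' : φ.toMonoidHom x = φ.toMonoidHom y
  · have hb : SepBound (sepDeg x z) y z := ⟨R, φ, hcard, by rw [← hxy']; exact hne⟩
    have hle : sepDeg y z ≤ sepDeg x z := Nat.sInf_le hb
    calc pdist x z = (2 : ℝ)⁻¹ ^ sepDeg x z := by rw [pdist, if_neg hxz]
      _ ≤ (2 : ℝ)⁻¹ ^ sepDeg y z := pow_le_pow_of_le_one (by norm_num) (by norm_num) hle
      _ = pdist y z := by rw [pdist, if_neg hyz]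
      _ ≤ _ := le_max_right _ _
  · have hb : SepBound (sepDeg x z) x y := ⟨R, φ, hcard, hxy'⟩
    have hle : sepDeg x y ≤ sepDeg x z := Nat.sInf_le hb
    calc pdist x z = (2 : ℝ)⁻¹ ^ sepDeg x z := by rw [pdist, if_neg hxz]
      _ ≤ (2 : ℝ)⁻¹ ^ sepDeg x y := pow_le_pow_of_le_one (by norm_num) (by norm_num) hle
      _ = pdist x y := by rw [pdist, if_neg hxy]
      _ ≤ _ := le_max_left _ _

noncomputable instance WM.metricSpace [Finite A] : MetricSpace (WM A) where
  dist := pdist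
  dist_self x := by simp [pdist]
  dist_comm := pdist_comm
  dist_triangle x y z := by
    refine (pdist_ultra x y z).trans (max_le ?_ ?_)
    · exact le_add_of_nonneg_right (pdist_nonneg _ _)
    · exact le_add_of_nonneg_left (pdist_nonneg _ _)
  eq_of_dist_eq_zero := by
    intro x y h
    by_contra hxy
    have h' : pdist x y = 0 := h
    rw [pdist, if_neg hxy] at h'
    exact absurd h' (ne_of_gt (pow_pos (by norm_num) _))


theorem nonSep_equivalence {A : Type} [VPAlphabet A] (n : ℕ) :
    Equivalence (fun x y : WM A => ¬ SepBound n x y) := by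
  constructor
  · rintro x ⟨R, φ, _, hne⟩
    exact hne rfl
  · intro x y h hs
    exact h (sepBound_comm.mp hs)
  · intro x y z hxy hyz ⟨R, φ, hcard, hne⟩
    by_cases hm : φ.toMonoidHom x = φ.toMonoidHom y
    · exact hyz ⟨R, φ, hcard, by rw [← hm]; exact hne⟩
    · exact hxy ⟨R, φ, hcard, hm⟩

theorem Setoid.finite_quotient_of_iff {X Y : Type*} [Finite Y] (r : Setoid X) (f : X → Y)
    (hf : ∀ x y, r x y ↔ f x = f y) : Finite (Quotient r) :=
  Finite.of_injective (Quotient.lift f fun x y h => (hf x y).mp h) <| by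
    rintro ⟨x⟩ ⟨y⟩ h
    exact Quotient.sound ((hf x y).mpr h)

theorem Metric.totallyBounded_univ_of_finite_quotient {X : Type*} [PseudoMetricSpace X]
    (h : ∀ ε > 0, ∃ r : Setoid X, Finite (Quotient r) ∧ ∀ x y, r x y → dist x y < ε) :
    TotallyBounded (Set.univ : Set X) := by
  refine Metric.totallyBounded_iff.mpr fun ε hε => ?_
  obtain ⟨r, hfin, hr⟩ := h ε hε
  refine ⟨Set.range (Quotient.out : Quotient r → X), Set.finite_range _, fun x _ => ?_⟩
  exact Set.mem_biUnion (Set.mem_range_self ⟦x⟧)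
    (Metric.mem_ball.mpr (hr x _ (r.symm (Quotient.mk_out x))))

theorem UniformSpace.Completion.compactSpace_of_totallyBounded {X : Type*} [UniformSpace X]
    (h : TotallyBounded (Set.univ : Set X)) : CompactSpace (Completion X) := by
  have hrange : TotallyBounded (Set.range ((↑) : X → Completion X)) := by
    simpa only [Set.image_univ] using h.image (Completion.uniformContinuous_coe X)
  have huniv : TotallyBounded (Set.univ : Set (Completion X)) := by
    simpa only [Completion.denseRange_coe.closure_range] using hrange.closure
  exact ⟨huniv.isCompact_of_isClosed isClosed_univ⟩

theorem sepBound_mono {x y : WM A} : Monotone fun n => SepBound n x y := by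
  rintro k n hkn ⟨R, φ, hcard, hne⟩
  exact ⟨R, φ, hcard.trans hkn, hne⟩

theorem not_sepBound_iff_lt_sepDeg [Finite A] {n : ℕ} {x y : WM A} (hxy : x ≠ y) :
    ¬ SepBound n x y ↔ n < sepDeg x y := by
  constructor
  · intro hn
    by_contra! hle
    exact hn (sepBound_mono hle (Nat.sInf_mem (exists_sepBound hxy)))
  · intro hlt hn
    exact (Nat.sInf_le hn).not_gt hlt

theorem WM.dist_eq_of_ne [Finite A] {x y : WM A} (hxy : x ≠ y) :
    dist x y = (2 : ℝ)⁻¹ ^ sepDeg x y :=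
  if_neg hxy

theorem setOf_not_sepBound_eq_ball [Finite A] (n : ℕ) (u : WM A) :
    {v : WM A | ¬ SepBound n u v} = Metric.ball u ((2 : ℝ)⁻¹ ^ n) := by
  ext v
  rw [Set.mem_ofPred_eq, Metric.mem_ball, dist_comm]
  rcases eq_or_ne u v with rfl | huv
  · simpa only [dist_self, pow_pos, inv_pos, two_pos, iff_true] using (nonSep_equivalence n).refl u
  · rw [WM.dist_eq_of_ne huv, pow_lt_pow_iff_right_of_lt_one₀ (by norm_num) (by norm_num),
      not_sepBound_iff_lt_sepDeg huv]

theorem wellMatched_call_ret {a b : A} (ha : VPAlphabet.kind a = VPKind.call)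
    (hb : VPAlphabet.kind b = VPKind.ret) : WellMatched ([a] ++ [b]) :=
  WellMatched.ext a b [] ha hb WellMatched.nil

namespace ExtHomWM

variable {R : Type*} [Monoid R]

/-- Junk value `1` off internal letters. -/
noncomputable def internVal {ER : ExtAlgebra R} (φ : ExtHomWM A ER) (c : A) : R :=
  if hc : VPAlphabet.kind c = VPKind.intern then φ.toMonoidHom ⟨[c], WellMatched.intern c hc⟩
  else 1

/-- Junk value `1 = id` off call/return pairs. -/
noncomputable def pairOp {ER : ExtAlgebra R} (φ : ExtHomWM A ER) (a b : A) : Function.End R :=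
  if h : VPAlphabet.kind a = VPKind.call ∧ VPAlphabet.kind b = VPKind.ret then
    φ.op [a] [b] (wellMatched_call_ret h.1 h.2)
  else 1

theorem toMonoidHom_eq_of_generators {E₁ E₂ : ExtAlgebra R} (φ : ExtHomWM A E₁)
    (ψ : ExtHomWM A E₂) (hi : φ.internVal = ψ.internVal) (hp : φ.pairOp = ψ.pairOp) :
    φ.toMonoidHom = ψ.toMonoidHom := by
  suffices h : ∀ w (hw : WellMatched w),
      φ.toMonoidHom (⟨w, hw⟩ : WM A) = ψ.toMonoidHom ⟨w, hw⟩ from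
    MonoidHom.ext fun x => h x.1 x.2
  intro w hw
  induction hw with
  | nil => exact (map_one φ.toMonoidHom).trans (map_one ψ.toMonoidHom).symm
  | intern c hc => simpa only [internVal, dif_pos hc] using congrFun hi c
  | ext a b w ha hb hw ih =>
    have hop : (φ.op [a] [b] (wellMatched_call_ret ha hb) : Function.End R) =
        ψ.op [a] [b] (wellMatched_call_ret ha hb) := by
      have := congrFun (congrFun hp a) b
      rwa [pairOp, pairOp, dif_pos ⟨ha, hb⟩, dif_pos ⟨ha, hb⟩] at this
    have hφ := φ.op_spec [a] [b] (wellMatched_call_ret ha hb) ⟨w, hw⟩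
    rw [hop, ih] at hφ
    exact hφ.symm.trans (ψ.op_spec [a] [b] (wellMatched_call_ret ha hb) ⟨w, hw⟩)
  | append u v hu hv ihu ihv =>
    have hφ := map_mul (M := WM A) φ.toMonoidHom ⟨u, hu⟩ ⟨v, hv⟩
    rw [ihu, ihv, ← map_mul (M := WM A) ψ.toMonoidHom ⟨u, hu⟩ ⟨v, hv⟩] at hφ
    exact hφ

end ExtHomWM

def ExtAlgebra.full (S : Type*) [Monoid S] : ExtAlgebra S :=
  ⟨⊤, fun _ => trivial, fun _ => trivial⟩

def ExtHomWM.transfer {R S : Type*} [Monoid R] [Monoid S] {ER : ExtAlgebra R}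
    (φ : ExtHomWM A ER) (g : R ≃* S) : ExtHomWM A (ExtAlgebra.full S) where
  toMonoidHom := g.toMonoidHom.comp φ.toMonoidHom
  op u v h := ⟨fun s => g ((φ.op u v h : Function.End R) (g.symm s)), trivial⟩
  op_one := by
    refine Subtype.ext (funext fun s => ?_)
    simp only [φ.op_one]
    exact g.apply_symm_apply s
  op_comp u v h u' v' h' h'' := by
    refine Subtype.ext (funext fun s => ?_)
    show g ((φ.op (u ++ u') (v' ++ v) h'' : Function.End R) (g.symm s)) =
      g ((φ.op u v h : Function.End R) (g.symm (g ((φ.op u' v' h' : Function.End R) (g.symm s)))))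
    rw [φ.op_comp u v h u' v' h', g.symm_apply_apply]
    rfl
  op_spec u v h x := by
    show g ((φ.op u v h : Function.End R) (g.symm (g (φ.toMonoidHom x)))) = _
    rw [g.symm_apply_apply, φ.op_spec]
    rfl

instance Function.End.instFinite (X : Type*) [Finite X] : Finite (Function.End X) :=
  inferInstanceAs (Finite (X → X))

instance Monoid.instFinite (M : Type*) [Finite M] : Finite (Monoid M) :=
  Finite.of_injective (fun μ : Monoid M => μ.mul) fun _ _ h => Monoid.ext h

def SmallMonoid (n : ℕ) : Type := Σ m : Fin (n + 1), Monoid (Fin m)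

namespace SmallMonoid

variable {n : ℕ}

/-- A synonym of `Fin m` that forgets its own arithmetic instances. -/
def Carrier (M : SmallMonoid n) : Type := Fin M.1

instance (M : SmallMonoid n) : Monoid M.Carrier := M.2

instance (M : SmallMonoid n) : Finite M.Carrier := inferInstanceAs (Finite (Fin M.1))

instance : Finite (SmallMonoid n) :=
  inferInstanceAs (Finite (Σ m : Fin (n + 1), Monoid (Fin m)))

theorem card_carrier_le (M : SmallMonoid n) : Nat.card M.Carrier ≤ n :=
  (Nat.card_eq_fintype_card.trans (Fintype.card_fin M.1)).trans_le (Nat.lt_succ_iff.mp M.1.2)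

theorem exists_mulEquiv {R : Type*} [Monoid R] [Finite R] (h : Nat.card R ≤ n) :
    ∃ M : SmallMonoid n, Nonempty (R ≃* M.Carrier) := by
  let e : Fin (Nat.card R) ≃ R := (Finite.equivFin R).symm
  let M : SmallMonoid n := ⟨⟨Nat.card R, Nat.lt_succ_of_le h⟩, e.monoid⟩
  let e' : M.Carrier ≃ R := e
  exact ⟨M, ⟨MulEquiv.symm { toEquiv := e', map_mul' := fun _ _ => e.apply_symm_apply _ }⟩⟩

end SmallMonoid

def signature (n : ℕ) (x : WM A) :
    Set (Σ M : SmallMonoid n, (A → M.Carrier) × (A → A → Function.End M.Carrier) × M.Carrier) :=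
  {p | ∃ ψ : ExtHomWM A (ExtAlgebra.full p.1.Carrier),
    p.2 = (ψ.internVal, ψ.pairOp, ψ.toMonoidHom x)}

theorem signature_subset_of_not_sepBound {n : ℕ} {x y : WM A} (h : ¬ SepBound n x y) :
    signature n x ⊆ signature n y := by
  rintro ⟨M, t⟩ ⟨ψ, ht⟩
  have hxy : ψ.toMonoidHom x = ψ.toMonoidHom y := by
    by_contra hne
    exact h ⟨{ carrier := M.Carrier, ext := ExtAlgebra.full _ }, ψ, M.card_carrier_le, hne⟩
  exact ⟨ψ, by rw [ht, hxy]⟩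

theorem not_sepBound_of_signature_subset {n : ℕ} {x y : WM A}
    (h : signature n x ⊆ signature n y) : ¬ SepBound n x y := by
  rintro ⟨R, φ, hcard, hne⟩
  obtain ⟨M, ⟨g⟩⟩ := SmallMonoid.exists_mulEquiv hcard
  set ψ := φ.transfer g
  obtain ⟨ψ', hψ'⟩ :=
    h (⟨ψ, rfl⟩ : ⟨M, ψ.internVal, ψ.pairOp, ψ.toMonoidHom x⟩ ∈ signature n x)
  simp only [Prod.mk.injEq] at hψ'
  obtain ⟨hi, hp, hv⟩ := hψ'
  have hψψ' := ExtHomWM.toMonoidHom_eq_of_generators ψ ψ' hi hp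
  exact hne (g.injective (show ψ.toMonoidHom x = ψ.toMonoidHom y by rw [hv, hψψ']))

theorem not_sepBound_iff_signature_eq {n : ℕ} {x y : WM A} :
    ¬ SepBound n x y ↔ signature n x = signature n y :=
  ⟨fun h => (signature_subset_of_not_sepBound h).antisymm
      (signature_subset_of_not_sepBound ((nonSep_equivalence n).symm h)),
    fun h => not_sepBound_of_signature_subset h.subset⟩

open UniformSpace in
/-- Inseparability by `Ext`-algebras of size at most `n` is an equivalence relation of
finite index whose classes are the open balls of radius `2^{-n}`; hence `WM(A)` is
totally bounded and its completion is compact. -/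
theorem statement14 {A : Type} [VPAlphabet A] [Finite A] (n : ℕ) :
    Equivalence (fun x y : WM A => ¬ SepBound n x y) ∧
    Finite (Quotient (Setoid.mk _ (nonSep_equivalence (A := A) n))) ∧
    (∀ u : WM A, {v : WM A | ¬ SepBound n u v} = Metric.ball u ((2 : ℝ)⁻¹ ^ n)) ∧
    TotallyBounded (Set.univ : Set (WM A)) ∧
    CompactSpace (Completion (WM A)) := by
  have hfinite (k : ℕ) : Finite (Quotient (Setoid.mk _ (nonSep_equivalence (A := A) k))) :=
    Setoid.finite_quotient_of_iff _ (signature k) fun _ _ => not_sepBound_iff_signature_eq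
  have htb : TotallyBounded (Set.univ : Set (WM A)) := by
    refine Metric.totallyBounded_univ_of_finite_quotient fun ε hε => ?_
    obtain ⟨k, hk⟩ := exists_pow_lt_of_lt_one hε (by norm_num : (2 : ℝ)⁻¹ < 1)
    refine ⟨_, hfinite k, fun x y hxy => ?_⟩
    have hy : y ∈ Metric.ball x ((2 : ℝ)⁻¹ ^ k) := setOf_not_sepBound_eq_ball k x ▸ hxy
    exact (Metric.mem_ball'.mp hy).trans hk
  exact ⟨nonSep_equivalence n, hfinite n, setOf_not_sepBound_eq_ball n, htb,
    Completion.compactSpace_of_totallyBounded htb⟩
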